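/- arXiv:cs/0701019 — 6 statements merged into one kernel-verified Lean document; each statement's English description precedes it below -/
import Mathlib

section
/- Let Z12, Z13, Z23 be positive reals with Z13 < M_H(Z12, Z23), and define A1 = Z23·(1/Z13 − 1/Z12), A2 = Z12·(1/Z13 − 1/Z23), and t* = (log(Z23·log A2/(Z12·log A1)) + log A2)/(log A1 + log A2). Then 0 ≤ t* ≤ 1. -/
/-!
Put `d = 1/Z13 - 1/Z12 - 1/Z23`, which is positive exactly when `Z13 < M_H(Z12, Z23)`.
Then `A1 = 1 + Z23 d` and `A2 = 1 + Z12 d`, and the two bounds on `t*` amount to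
`Z12 log A1 ≤ Z23 A2 log A2` and its mirror image. Both follow from
`log (1 + y) ≤ y` and `x ≤ (1 + x) log (1 + x)`, the tangent-line bounds of the concave `log`
and the convex `u log u` at `1`.
-/

/-- Harmonic-mean-type quantity `M_H(x,y) = 1/(1/x + 1/y)`. -/
noncomputable def MH (x y : ℝ) : ℝ := 1 / (1 / x + 1 / y)

open Real Set

lemma one_div_add_one_div_lt_of_lt_MH {x y z : ℝ} (hx : 0 < x) (hy : 0 < y) (hz : 0 < z)
    (h : z < MH x y) : 1 / x + 1 / y < 1 / z := by
  have hs : 0 < 1 / x + 1 / y := by positivity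
  rw [MH, lt_one_div hz hs] at h
  exact h

lemma mul_log_one_add_le {x y : ℝ} (hx : 0 ≤ x) (hy : 0 ≤ y) :
    x * log (1 + y) ≤ y * ((1 + x) * log (1 + x)) := by
  have hlog : log (1 + y) ≤ y := by linarith [log_le_sub_one_of_pos (by linarith : 0 < 1 + y)]
  have hmul : x ≤ (1 + x) * log (1 + x) := by linarith [self_sub_one_le_mul_log (by linarith : 0 ≤ 1 + x)]
  calc x * log (1 + y) ≤ x * y := mul_le_mul_of_nonneg_left hlog hx
    _ = y * x := mul_comm x y
    _ ≤ y * ((1 + x) * log (1 + x)) := mul_le_mul_of_nonneg_left hmul hy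

lemma mul_log_one_add_mul_le {a b d : ℝ} (ha : 0 < a) (hb : 0 < b) (hd : 0 < d) :
    a * log (1 + b * d) ≤ b * ((1 + a * d) * log (1 + a * d)) := by
  have h := mul_log_one_add_le (mul_pos ha hd).le (mul_pos hb hd).le
  have h' : d * (a * log (1 + b * d)) ≤ d * (b * ((1 + a * d) * log (1 + a * d))) := by
    linarith
  exact le_of_mul_le_mul_left h' hd

lemma log_add_log_div_log_add_log_mem_Icc {q A₁ A₂ : ℝ} (hq : 0 < q) (hA₂ : 0 < A₂)
    (h₀ : 1 ≤ q * A₂) (h₁ : q ≤ A₁) :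
    (log q + log A₂) / (log A₁ + log A₂) ∈ Icc 0 1 := by
  have hnum : 0 ≤ log q + log A₂ := by
    rw [← log_mul hq.ne' hA₂.ne']
    exact log_nonneg h₀
  have hle : log q + log A₂ ≤ log A₁ + log A₂ := by
    linarith [log_le_log hq h₁]
  exact ⟨div_nonneg hnum (hnum.trans hle), div_le_one_of_le₀ hle (hnum.trans hle)⟩

lemma tstar_mem_Icc_of_pos {a b d : ℝ} (ha : 0 < a) (hb : 0 < b) (hd : 0 < d) :
    (log (b * log (1 + a * d) / (a * log (1 + b * d))) + log (1 + a * d)) /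
      (log (1 + b * d) + log (1 + a * d)) ∈ Icc 0 1 := by
  have hL₁ : 0 < log (1 + b * d) := log_pos (by nlinarith)
  have hL₂ : 0 < log (1 + a * d) := log_pos (by nlinarith)
  have hden : 0 < a * log (1 + b * d) := mul_pos ha hL₁
  apply log_add_log_div_log_add_log_mem_Icc (by positivity) (by positivity)
  · rw [div_mul_eq_mul_div, one_le_div hden]
    exact (mul_log_one_add_mul_le ha hb hd).trans_eq (by ring)
  · rw [div_le_iff₀ hden]
    exact (mul_log_one_add_mul_le hb ha hd).trans_eq (by ring)

theorem tstar_mem_unit_interval (Z12 Z13 Z23 A1 A2 tstar : ℝ)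
    (h12 : 0 < Z12) (h13 : 0 < Z13) (h23 : 0 < Z23)
    (h : Z13 < MH Z12 Z23)
    (hA1 : A1 = Z23 * (1 / Z13 - 1 / Z12))
    (hA2 : A2 = Z12 * (1 / Z13 - 1 / Z23))
    (ht : tstar = (Real.log (Z23 * Real.log A2 / (Z12 * Real.log A1)) + Real.log A2) /
      (Real.log A1 + Real.log A2)) :
    0 ≤ tstar ∧ tstar ≤ 1 := by
  set d := 1 / Z13 - 1 / Z12 - 1 / Z23 with hd_def
  have hd : 0 < d := by linarith [one_div_add_one_div_lt_of_lt_MH h12 h23 h13 h]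
  have hA1d : A1 = 1 + Z23 * d := by
    rw [hA1, hd_def]; field_simp; ring
  have hA2d : A2 = 1 + Z12 * d := by
    rw [hA2, hd_def]; field_simp; ring
  rw [ht, hA1d, hA2d]
  exact tstar_mem_Icc_of_pos h12 h23 hd
end

section
/- For all real K ≥ 0 and all real t with 0 < t ≤ 1, (1−t)·exp(K/t) + t − exp(K·(1−t)/t) ≥ 0. -/
theorem Real.exp_mul_le_mul_exp_add {a b : ℝ} (ha : 0 ≤ a) (hb : 0 ≤ b) (hab : a + b = 1)
    (x : ℝ) : Real.exp (a * x) ≤ a * Real.exp x + b := by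
  simpa using convexOn_exp.2 (Set.mem_univ x) (Set.mem_univ 0) ha hb hab

theorem exp_combination_nonneg_general (K t : ℝ) (ht0 : 0 < t) (ht1 : t ≤ 1) :
    0 ≤ (1 - t) * Real.exp (K / t) + t - Real.exp (K * (1 - t) / t) := by
  have h := Real.exp_mul_le_mul_exp_add (sub_nonneg.2 ht1) ht0.le (sub_add_cancel 1 t) (K / t)
  rw [show (1 - t) * (K / t) = K * (1 - t) / t by ring] at h
  linarith

theorem exp_combination_nonneg (K t : ℝ) (hK : 0 ≤ K) (ht0 : 0 < t) (ht1 : t ≤ 1) :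
    0 ≤ (1 - t) * Real.exp (K / t) + t - Real.exp (K * (1 - t) / t) :=
  exp_combination_nonneg_general K t ht0 ht1
end

section
/- Let Z13, Z12, Z23 be i.i.d. exponential random variables with rate 1, and let S > 0. Then P( S ≤ 1/(Z12+Z13) or S ≤ 1/(Z13+Z23) ) = 1 − 2·exp(−1/S) + exp(−2/S). -/
open MeasureTheory ProbabilityTheory Real Set

lemma expM_def : expMeasure 1 = volume.withDensity (exponentialPDF 1) := rfl

lemma expM_Iic (c : ℝ) :
    expMeasure 1 (Iic c) = ENNReal.ofReal (if 0 ≤ c then 1 - rexp (-c) else 0) := by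
  rw [expM_def, withDensity_apply _ measurableSet_Iic,
    lintegral_exponentialPDF_eq_antiDeriv one_pos c]
  simp [one_mul]

lemma expM_Ioi {c : ℝ} (hc : 0 ≤ c) :
    expMeasure 1 (Ioi c) = ENNReal.ofReal (rexp (-c)) := by
  haveI : IsProbabilityMeasure (expMeasure 1) := isProbabilityMeasure_expMeasure one_pos
  have h1 : Ioi c = (Iic c)ᶜ := by simp
  rw [h1, measure_compl measurableSet_Iic (measure_ne_top _ _), measure_univ,
    expM_Iic, if_pos hc]
  rw [← ENNReal.ofReal_one, ← ENNReal.ofReal_sub _ (by simp [exp_le_one_iff]; positivity)]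
  congr 1
  ring

lemma inner_le {t x : ℝ} (hx : x ≤ t) :
    ((expMeasure 1).prod (expMeasure 1)) {q : ℝ × ℝ | q.1 + x ≤ t ∨ x + q.2 ≤ t}
      = ENNReal.ofReal (1 - rexp (-(2 * (t - x)))) := by
  haveI : IsProbabilityMeasure (expMeasure 1) := isProbabilityMeasure_expMeasure one_pos
  have hset : {q : ℝ × ℝ | q.1 + x ≤ t ∨ x + q.2 ≤ t} = ((Ioi (t - x)) ×ˢ (Ioi (t - x)))ᶜ := by
    ext q
    simp only [mem_setOf_eq, mem_compl_iff, mem_prod, mem_Ioi, not_and_or, not_lt]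
    constructor
    · rintro (h | h)
      · exact Or.inl (by linarith)
      · exact Or.inr (by linarith)
    · rintro (h | h)
      · exact Or.inl (by linarith)
      · exact Or.inr (by linarith)
  have hc : (0:ℝ) ≤ t - x := by linarith
  rw [hset, prob_compl_eq_one_sub ((measurableSet_Ioi).prod measurableSet_Ioi),
    Measure.prod_prod, expM_Ioi hc, ← ENNReal.ofReal_mul (by positivity), ← Real.exp_add]
  have h2 : -(t - x) + -(t - x) = -(2 * (t - x)) := by ring
  rw [h2]
  rw [← ENNReal.ofReal_one, ← ENNReal.ofReal_sub _ (by positivity)]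

lemma inner_gt {t x : ℝ} (hx : t < x) :
    ((expMeasure 1).prod (expMeasure 1)) {q : ℝ × ℝ | q.1 + x ≤ t ∨ x + q.2 ≤ t} = 0 := by
  haveI : IsProbabilityMeasure (expMeasure 1) := isProbabilityMeasure_expMeasure one_pos
  have hnull : ((expMeasure 1).prod (expMeasure 1))
      ((Iic (t - x) ×ˢ univ) ∪ (univ ×ˢ Iic (t - x))) = 0 := by
    apply measure_union_null <;>
    · rw [Measure.prod_prod, expM_Iic, if_neg (by linarith)]
      simp
  refine measure_mono_null ?_ hnull
  rintro ⟨a, b⟩ (h | h)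
  · exact Or.inl ⟨by simp only [mem_Iic]; linarith, trivial⟩
  · exact Or.inr ⟨trivial, by simp only [mem_Iic]; linarith⟩

/-- `p.1` is `Z13`, `p.2.1` is `Z12`, `p.2.2` is `Z23`, all i.i.d. `Exp(1)`. -/
theorem prob_cut_events (S : ℝ) (hS : 0 < S) :
    ((expMeasure 1).prod ((expMeasure 1).prod (expMeasure 1)))
      {p : ℝ × ℝ × ℝ | p.2.1 + p.1 ≤ 1 / S ∨ p.1 + p.2.2 ≤ 1 / S} =
      ENNReal.ofReal (1 - 2 * Real.exp (-1 / S) + Real.exp (-2 / S)) := by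
  haveI : IsProbabilityMeasure (expMeasure 1) := isProbabilityMeasure_expMeasure one_pos
  set t : ℝ := 1 / S with ht_def
  have ht : 0 < t := by positivity
  have hmeas : MeasurableSet {p : ℝ × ℝ × ℝ | p.2.1 + p.1 ≤ t ∨ p.1 + p.2.2 ≤ t} := by
    apply MeasurableSet.union
    · exact measurableSet_le (measurable_snd.fst.add measurable_fst) measurable_const
    · exact measurableSet_le (measurable_fst.add measurable_snd.snd) measurable_const
  rw [Measure.prod_apply hmeas]
  -- pointwise value of the inner measure
  have hinner : ∀ x : ℝ,
      ((expMeasure 1).prod (expMeasure 1)) (Prod.mk x ⁻¹' {p : ℝ × ℝ × ℝ | p.2.1 + p.1 ≤ t ∨ p.1 + p.2.2 ≤ t})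
        = ENNReal.ofReal (if x ≤ t then 1 - rexp (-(2 * (t - x))) else 0) := by
    intro x
    have hpre : Prod.mk x ⁻¹' {p : ℝ × ℝ × ℝ | p.2.1 + p.1 ≤ t ∨ p.1 + p.2.2 ≤ t}
        = {q : ℝ × ℝ | q.1 + x ≤ t ∨ x + q.2 ≤ t} := rfl
    rw [hpre]
    by_cases hx : x ≤ t
    · rw [inner_le hx, if_pos hx]
    · rw [inner_gt (not_le.mp hx), if_neg hx, ENNReal.ofReal_zero]
  rw [lintegral_congr hinner]
  -- move to Lebesgue measure with density
  have hg : Measurable fun x : ℝ => ENNReal.ofReal (if x ≤ t then 1 - rexp (-(2 * (t - x))) else 0) := by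
    apply Measurable.ennreal_ofReal
    exact Measurable.ite measurableSet_Iic (by fun_prop) measurable_const
  have hpdf : Measurable (exponentialPDF 1) := (measurable_exponentialPDFReal 1).ennreal_ofReal
  rw [expM_def, lintegral_withDensity_eq_lintegral_mul _ hpdf hg]
  -- the integrand as ofReal of a real function
  have hfun : ∀ x : ℝ, (exponentialPDF 1 * fun x => ENNReal.ofReal (if x ≤ t then 1 - rexp (-(2 * (t - x))) else 0)) x
      = ENNReal.ofReal ((Icc 0 t).indicator (fun x => rexp (-x) - rexp (x - 2 * t)) x) := by
    intro x
    simp only [Pi.mul_apply]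
    by_cases h0 : 0 ≤ x
    · by_cases h1 : x ≤ t
      · rw [exponentialPDF_of_nonneg h0, if_pos h1, indicator_of_mem (mem_Icc.mpr ⟨h0, h1⟩),
          ← ENNReal.ofReal_mul (by positivity)]
        congr 1
        have key : rexp (x - 2 * t) = rexp (-(1 * x)) * rexp (-(2 * (t - x))) := by
          rw [← Real.exp_add]; congr 1; ring
        have key2 : rexp (-x) = rexp (-(1 * x)) := by congr 1; ring
        rw [key, key2]; ring
      · rw [if_neg h1, indicator_of_notMem (fun hm => h1 hm.2)]
        simp
    · rw [exponentialPDF_of_neg (not_le.mp h0), indicator_of_notMem (fun hm => h0 hm.1)]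
      simp
  rw [lintegral_congr hfun]
  -- convert to a Bochner integral
  have hcont : Continuous (fun x : ℝ => rexp (-x) - rexp (x - 2 * t)) := by fun_prop
  have hint : Integrable ((Icc 0 t).indicator (fun x => rexp (-x) - rexp (x - 2 * t))) := by
    rw [integrable_indicator_iff measurableSet_Icc]
    exact hcont.integrableOn_Icc
  have hnn : 0 ≤ᵐ[volume] (Icc 0 t).indicator (fun x => rexp (-x) - rexp (x - 2 * t)) := by
    refine Filter.Eventually.of_forall fun x => ?_
    by_cases hm : x ∈ Icc 0 t
    · rw [indicator_of_mem hm]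
      have : x - 2 * t ≤ -x := by rcases hm with ⟨h1, h2⟩; linarith
      simpa using Real.exp_le_exp.mpr this
    · rw [indicator_of_notMem hm]
      simp
  rw [← ofReal_integral_eq_lintegral_ofReal hint hnn]
  congr 1
  rw [integral_indicator measurableSet_Icc, integral_Icc_eq_integral_Ioc,
    ← intervalIntegral.integral_of_le ht.le]
  rw [intervalIntegral.integral_sub]
  · have e1 : ∫ x in (0:ℝ)..t, rexp (-x) = 1 - rexp (-t) := by
      rw [intervalIntegral.integral_comp_neg (fun x => rexp x), integral_exp]
      norm_num
    have e2 : ∫ x in (0:ℝ)..t, rexp (x - 2 * t) = rexp (-t) - rexp (-2 * t) := by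
      rw [intervalIntegral.integral_comp_sub_right (fun x => rexp x) (2 * t), integral_exp,
        show t - 2 * t = -t by ring, show 0 - 2 * t = -2 * t by ring]
    rw [e1, e2]
    have h1 : -t = -1 / S := by rw [ht_def]; ring
    have h2 : -2 * t = -2 / S := by rw [ht_def]; ring
    rw [h1, h2]
    ring
  · apply Continuous.intervalIntegrable; fun_prop
  · apply Continuous.intervalIntegrable; fun_prop
end

section
/- Let Z13, Z12, Z23 be i.i.d. Exp(1) random variables and S > 0. Then P( {Z12 ≤ 1/S or Z13 + Z23 ≤ 1/S} and Z13 < Z12 ) = (1/2)·(1 − exp(−2/S)) − (1/S)·exp(−2/S). -/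
open scoped ENNReal
open MeasureTheory ProbabilityTheory Real Set

/-!
Write `t = 1 / S` and condition on `Z13 = x ≥ 0`. Given `x < Z12`, the event fails exactly when
`Z12 > t` and `Z23 > t - x`, so for `x < t` its conditional probability is
`e^{-x} - e^{-t} e^{-(t - x)}`, while for `x ≥ t` it is `0`. Against the density `e^{-x}` this
leaves `∫₀ᵗ (e^{-2x} - e^{-2t}) dx = (1 - e^{-2t}) / 2 - t e^{-2t}`.
-/

instance : IsProbabilityMeasure (expMeasure 1) := isProbabilityMeasure_expMeasure one_pos

lemma lintegral_expMeasure (r : ℝ) {f : ℝ → ℝ≥0∞} (hf : Measurable f) :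
    ∫⁻ x, f x ∂expMeasure r = ∫⁻ x, exponentialPDF r x * f x :=
  lintegral_withDensity_eq_lintegral_mul _
    (measurable_exponentialPDFReal r).ennreal_ofReal hf

section ExpMeasure

variable {r : ℝ} (hr : 0 < r)
include hr

lemma expMeasure_Iic (a : ℝ) : expMeasure r (Iic a) = ENNReal.ofReal (1 - exp (-(r * a))) := by
  rw [expMeasure, gammaMeasure, withDensity_apply _ measurableSet_Iic]
  change ∫⁻ y in Iic a, exponentialPDF r y = _
  rw [lintegral_exponentialPDF_eq_antiDeriv hr]
  split_ifs with ha
  · rfl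
  · rw [ENNReal.ofReal_zero, eq_comm, ENNReal.ofReal_eq_zero, sub_nonpos, one_le_exp_iff]
    nlinarith

lemma expMeasure_Ioi {a : ℝ} (ha : 0 ≤ a) :
    expMeasure r (Ioi a) = ENNReal.ofReal (exp (-(r * a))) := by
  have := isProbabilityMeasure_expMeasure hr
  rw [← compl_Iic, prob_compl_eq_one_sub measurableSet_Iic, expMeasure_Iic hr,
    ← ENNReal.ofReal_one,
    ← ENNReal.ofReal_sub _ (sub_nonneg.2 (exp_le_one_iff.2 (by nlinarith))), sub_sub_cancel]

end ExpMeasure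

lemma setOf_le_or_add_le_and_lt_eq_sdiff (x t : ℝ) :
    {q : ℝ × ℝ | (q.1 ≤ t ∨ x + q.2 ≤ t) ∧ x < q.1} =
      Ioi x ×ˢ univ \ Ioi t ×ˢ Ioi (t - x) := by
  ext ⟨y, z⟩
  simp only [mem_ofPred_eq, mem_sdiff, mem_prod, mem_Ioi, mem_univ, and_true, not_and_or, not_lt]
  constructor
  · rintro ⟨h | h, hxy⟩ <;> refine ⟨hxy, ?_⟩ <;> [left; right] <;> linarith
  · rintro ⟨hxy, h | h⟩ <;> refine ⟨?_, hxy⟩ <;> [left; right] <;> linarith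

/-- For `t ≤ x` both sides vanish, the right one because `ENNReal.ofReal` truncates at `0`. -/
lemma expMeasure_one_prod_slice {x : ℝ} (t : ℝ) (hx : 0 ≤ x) :
    (expMeasure 1).prod (expMeasure 1) {q : ℝ × ℝ | (q.1 ≤ t ∨ x + q.2 ≤ t) ∧ x < q.1} =
      ENNReal.ofReal (exp (-x) - exp (x - 2 * t)) := by
  rcases lt_or_ge x t with hxt | htx
  · rw [setOf_le_or_add_le_and_lt_eq_sdiff,
      measure_sdiff (prod_mono (Ioi_subset_Ioi hxt.le) (subset_univ _))
      (measurableSet_Ioi.prod measurableSet_Ioi).nullMeasurableSet (measure_ne_top _ _),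
      Measure.prod_prod, Measure.prod_prod, measure_univ, mul_one, expMeasure_Ioi one_pos hx,
      expMeasure_Ioi one_pos (by linarith), expMeasure_Ioi one_pos (by linarith),
      ← ENNReal.ofReal_mul (exp_nonneg _), ← ENNReal.ofReal_sub _ (by positivity), ← exp_add]
    ring_nf
  · rw [ENNReal.ofReal_of_nonpos (sub_nonpos.2 (exp_le_exp.2 (by linarith)))]
    refine measure_mono_null (fun q hq => ?_ : _ ⊆ univ ×ˢ Iic (t - x)) ?_
    · obtain ⟨h | h, hxq⟩ := hq
      · linarith
      · exact mem_prod.2 ⟨mem_univ _, show q.2 ≤ t - x by linarith⟩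
    · rw [Measure.prod_prod, expMeasure_Iic one_pos,
        ENNReal.ofReal_of_nonpos (sub_nonpos.2 (one_le_exp_iff.2 (by linarith))), mul_zero]

lemma exponentialPDF_one_mul_slice (t x : ℝ) :
    exponentialPDF 1 x *
        (expMeasure 1).prod (expMeasure 1) {q : ℝ × ℝ | (q.1 ≤ t ∨ x + q.2 ≤ t) ∧ x < q.1} =
      (Icc 0 t).indicator (fun x => ENNReal.ofReal (exp (-(2 * x)) - exp (-(2 * t)))) x := by
  rcases lt_or_ge x 0 with hx | hx
  · rw [exponentialPDF_of_neg hx, zero_mul, indicator_of_notMem (fun h => hx.not_ge h.1)]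
  rw [exponentialPDF_of_nonneg hx, expMeasure_one_prod_slice t hx,
    ← ENNReal.ofReal_mul (by positivity), one_mul, mul_sub, ← exp_add, ← exp_add]
  by_cases hxt : x ≤ t
  · rw [indicator_of_mem (show x ∈ Icc 0 t from ⟨hx, hxt⟩)]
    ring_nf
  · rw [indicator_of_notMem (fun h => hxt h.2),
      ENNReal.ofReal_of_nonpos (sub_nonpos.2 (exp_le_exp.2 (by linarith)))]

lemma integral_exp_neg_two_mul_sub (t : ℝ) :
    ∫ x in 0..t, (exp (-(2 * x)) - exp (-(2 * t))) =
      (1 - exp (-(2 * t))) / 2 - t * exp (-(2 * t)) := by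
  have hint : ∫ x in 0..t, exp (-(2 * x)) = (1 - exp (-(2 * t))) / 2 := by
    rw [intervalIntegral.integral_comp_mul_left (fun y => exp (-y)) two_ne_zero,
      intervalIntegral.integral_comp_neg, integral_exp]
    simp only [mul_zero, neg_zero, exp_zero, smul_eq_mul]
    ring
  rw [intervalIntegral.integral_sub _ intervalIntegrable_const, intervalIntegral.integral_const,
    hint]
  · simp
  · exact (by fun_prop : Continuous fun x => exp (-(2 * x))).intervalIntegrable 0 t

lemma expMeasure_one_prod_prod_event {t : ℝ} (ht : 0 ≤ t) :
    ((expMeasure 1).prod ((expMeasure 1).prod (expMeasure 1)))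
      {p : ℝ × ℝ × ℝ | (p.2.1 ≤ t ∨ p.1 + p.2.2 ≤ t) ∧ p.1 < p.2.1} =
      ENNReal.ofReal ((1 - exp (-(2 * t))) / 2 - t * exp (-(2 * t))) := by
  have hE : MeasurableSet {p : ℝ × ℝ × ℝ | (p.2.1 ≤ t ∨ p.1 + p.2.2 ≤ t) ∧ p.1 < p.2.1} := by
    measurability
  have hint : IntegrableOn (fun x => exp (-(2 * x)) - exp (-(2 * t))) (Icc 0 t) :=
    (by fun_prop : Continuous fun x => exp (-(2 * x)) - exp (-(2 * t))).integrableOn_Icc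
  have hnonneg : 0 ≤ᵐ[volume.restrict (Icc 0 t)] fun x => exp (-(2 * x)) - exp (-(2 * t)) :=
    (ae_restrict_iff' measurableSet_Icc).2 <| Filter.Eventually.of_forall fun x hx =>
      sub_nonneg.2 (exp_le_exp.2 (by linarith [hx.2]))
  rw [Measure.prod_apply hE, lintegral_expMeasure 1 (measurable_measure_prodMk_left hE)]
  simp only [preimage_ofPred_eq]
  rw [lintegral_congr (exponentialPDF_one_mul_slice t), lintegral_indicator measurableSet_Icc,
    ← ofReal_integral_eq_lintegral_ofReal hint hnonneg, integral_Icc_eq_integral_Ioc,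
    ← intervalIntegral.integral_of_le ht, integral_exp_neg_two_mul_sub]

/-- `p.1` is `Z13`, `p.2.1` is `Z12`, `p.2.2` is `Z23`, all i.i.d. `Exp(1)`. -/
theorem prob_df_event (S : ℝ) (hS : 0 < S) :
    ((expMeasure 1).prod ((expMeasure 1).prod (expMeasure 1)))
      {p : ℝ × ℝ × ℝ | (p.2.1 ≤ 1 / S ∨ p.1 + p.2.2 ≤ 1 / S) ∧ p.1 < p.2.1} =
      ENNReal.ofReal ((1 / 2) * (1 - Real.exp (-2 / S)) - (1 / S) * Real.exp (-2 / S)) := by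
  rw [expMeasure_one_prod_prod_event (one_div_pos.2 hS).le]
  ring_nf
end

section
/- Let Z13, Z12, Z23 be i.i.d. Exp(1) random variables. Define B̂(Z) = sqrt(2/Z13)·sqrt(1/Z12 + 1/Z23) if Z13 < M_H(Z12, Z23), and B̂(Z) = 1/Z13 otherwise, where M_H(x,y) = 1/(1/x+1/y). Then E[B̂(Z)] < ∞. -/
open MeasureTheory ProbabilityTheory

/-!
Both branches of `B̂(Z)` are bounded by `√(2/Z₁₃) · √(1/Z₁₂ + 1/Z₂₃)`: on the second
branch `Z₁₃ ≥ M_H(Z₁₂, Z₂₃)`, i.e. `1/Z₁₃ ≤ 1/Z₁₂ + 1/Z₂₃`, so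
`1/Z₁₃ = √(1/Z₁₃)² ≤ √(1/Z₁₃) √(1/Z₁₂ + 1/Z₂₃)`. By subadditivity of the square root this is at most
`√2 · Z₁₃^{-1/2} (Z₁₂^{-1/2} + Z₂₃^{-1/2})`, which is integrable by independence, because
`E[Z^{-1/2}] = Γ(1/2) < ∞` for `Z ~ Exp(1)`.
-/

noncomputable def Bhat (z₁₃ z₁₂ z₂₃ : ℝ) : ℝ :=
  if z₁₃ < MH z₁₂ z₂₃ then Real.sqrt (2 / z₁₃) * Real.sqrt (1 / z₁₂ + 1 / z₂₃) else 1 / z₁₃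

lemma Real.sqrt_add_le_sqrt_add_sqrt {x y : ℝ} (hx : 0 ≤ x) (hy : 0 ≤ y) :
    Real.sqrt (x + y) ≤ Real.sqrt x + Real.sqrt y := by
  rw [Real.sqrt_le_iff]
  refine ⟨by positivity, ?_⟩
  nlinarith [Real.sq_sqrt hx, Real.sq_sqrt hy, Real.sqrt_nonneg x, Real.sqrt_nonneg y]

lemma one_div_le_add_of_MH_le {a b c : ℝ} (hb : 0 < b) (hc : 0 < c) (h : MH b c ≤ a) :
    1 / a ≤ 1 / b + 1 / c := by
  have hMH : 0 < MH b c := by unfold MH; positivity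
  simpa [MH] using one_div_le_one_div_of_le hMH h

lemma Bhat_le {a b c : ℝ} (ha : 0 < a) (hb : 0 < b) (hc : 0 < c) :
    Bhat a b c ≤ Real.sqrt (2 / a) * Real.sqrt (1 / b + 1 / c) := by
  unfold Bhat
  split_ifs with h
  · exact le_rfl
  calc 1 / a = Real.sqrt (1 / a) * Real.sqrt (1 / a) := (Real.mul_self_sqrt (by positivity)).symm
    _ ≤ Real.sqrt (2 / a) * Real.sqrt (1 / b + 1 / c) := by
        gcongr
        · norm_num
        · exact one_div_le_add_of_MH_le hb hc (not_lt.mp h)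

lemma norm_Bhat_le {a b c : ℝ} (ha : 0 < a) (hb : 0 < b) (hc : 0 < c) :
    ‖Bhat a b c‖ ≤
      Real.sqrt 2 * (Real.sqrt (1 / a) * (Real.sqrt (1 / b) + Real.sqrt (1 / c))) := by
  have hnonneg : 0 ≤ Bhat a b c := by unfold Bhat; split_ifs <;> positivity
  rw [Real.norm_of_nonneg hnonneg]
  calc Bhat a b c ≤ Real.sqrt (2 / a) * Real.sqrt (1 / b + 1 / c) := Bhat_le ha hb hc
    _ = Real.sqrt 2 * (Real.sqrt (1 / a) * Real.sqrt (1 / b + 1 / c)) := by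
        rw [div_eq_mul_one_div 2 a, Real.sqrt_mul zero_le_two, mul_assoc]
    _ ≤ Real.sqrt 2 * (Real.sqrt (1 / a) * (Real.sqrt (1 / b) + Real.sqrt (1 / c))) := by
        gcongr
        exact Real.sqrt_add_le_sqrt_add_sqrt (by positivity) (by positivity)

lemma measurable_Bhat : Measurable fun p : ℝ × ℝ × ℝ => Bhat p.1 p.2.1 p.2.2 := by
  have hMH : Measurable fun p : ℝ × ℝ × ℝ => MH p.2.1 p.2.2 := by unfold MH; fun_prop
  exact Measurable.ite (measurableSet_lt measurable_fst hMH) (by fun_prop) (by fun_prop)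

lemma MeasureTheory.Integrable.mul_add_prod {α β γ L : Type*} [MeasurableSpace α]
    [MeasurableSpace β] [MeasurableSpace γ] [NormedRing L]
    {μ : Measure α} {ν : Measure β} {ρ : Measure γ} [IsFiniteMeasure ν] [IsFiniteMeasure ρ]
    {f : α → L} {g : β → L} {h : γ → L}
    (hf : Integrable f μ) (hg : Integrable g ν) (hh : Integrable h ρ) :
    Integrable (fun p : α × β × γ => f p.1 * (g p.2.1 + h p.2.2)) (μ.prod (ν.prod ρ)) :=
  hf.mul_prod ((hg.comp_fst ρ).add (hh.comp_snd ν))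

lemma ae_pos_gammaMeasure (a r : ℝ) : ∀ᵐ x ∂gammaMeasure a r, 0 < x := by
  rw [ae_iff]
  simp only [not_lt]
  change gammaMeasure a r (Set.Iic 0) = 0
  rw [gammaMeasure, withDensity_apply _ measurableSet_Iic,
    ← setLIntegral_congr Iio_ae_eq_Iic]
  exact lintegral_gammaPDF_of_nonpos le_rfl

lemma integrable_sqrt_one_div_gammaMeasure {a r : ℝ} (ha : 1 / 2 < a) (hr : 0 < r) :
    Integrable (fun x => Real.sqrt (1 / x)) (gammaMeasure a r) := by
  have hpdf : Measurable (gammaPDF a r) := (measurable_gammaPDFReal a r).ennreal_ofReal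
  rw [gammaMeasure,
    integrable_withDensity_iff hpdf (ae_of_all _ fun _ => ENNReal.ofReal_lt_top)]
  have hGamma : IntegrableOn (fun x : ℝ => x ^ (a - 3 / 2) * Real.exp (-r * x ^ (1 : ℝ)))
      (Set.Ioi 0) := integrableOn_rpow_mul_exp_neg_mul_rpow (by linarith) one_pos hr
  refine (IntegrableOn.integrable_indicator (hGamma.const_mul (r ^ a / Real.Gamma a))
    measurableSet_Ioi).congr (ae_of_all _ fun x => ?_)
  dsimp only
  rcases le_or_gt x 0 with hx | hx
  · have hsqrt : Real.sqrt (1 / x) = 0 := Real.sqrt_eq_zero'.mpr (one_div_nonpos.mpr hx)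
    rw [Set.indicator_of_notMem (Set.notMem_Ioi.mpr hx), hsqrt, zero_mul]
  · have hpow : Real.sqrt (1 / x) * x ^ (a - 1) = x ^ (a - 3 / 2) := by
      rw [Real.sqrt_eq_rpow, one_div, Real.inv_rpow hx.le, ← Real.rpow_neg hx.le,
        ← Real.rpow_add hx]
      congr 1
      ring
    rw [Set.indicator_of_mem (Set.mem_Ioi.mpr hx), gammaPDF_of_nonneg hx.le,
      ENNReal.toReal_ofReal (by positivity), Real.rpow_one, ← hpow, neg_mul]
    ring

/-- `p.1` is `Z13`, `p.2.1` is `Z12`, `p.2.2` is `Z23`, all i.i.d. `Exp(1)`. -/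
theorem Bhat_integrable :
    Integrable (fun p : ℝ × ℝ × ℝ =>
        if p.1 < MH p.2.1 p.2.2 then
          Real.sqrt (2 / p.1) * Real.sqrt (1 / p.2.1 + 1 / p.2.2)
        else 1 / p.1)
      ((expMeasure 1).prod ((expMeasure 1).prod (expMeasure 1))) := by
  have : IsProbabilityMeasure (expMeasure 1) := isProbabilityMeasure_expMeasure one_pos
  set μ := expMeasure 1
  have hZ : Integrable (fun x => Real.sqrt (1 / x)) μ :=
    integrable_sqrt_one_div_gammaMeasure (by norm_num) one_pos
  have hpos : ∀ᵐ x ∂μ, 0 < x := ae_pos_gammaMeasure 1 1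
  have h₁₃ : ∀ᵐ p ∂μ.prod (μ.prod μ), 0 < p.1 := Measure.quasiMeasurePreserving_fst.ae hpos
  have h₁₂ : ∀ᵐ p ∂μ.prod (μ.prod μ), 0 < p.2.1 :=
    (Measure.quasiMeasurePreserving_fst.comp Measure.quasiMeasurePreserving_snd).ae hpos
  have h₂₃ : ∀ᵐ p ∂μ.prod (μ.prod μ), 0 < p.2.2 :=
    (Measure.quasiMeasurePreserving_snd.comp Measure.quasiMeasurePreserving_snd).ae hpos
  refine ((hZ.mul_add_prod hZ hZ).const_mul (Real.sqrt 2)).mono'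
    measurable_Bhat.aestronglyMeasurable ?_
  filter_upwards [h₁₃, h₁₂, h₂₃] with p ha hb hc
  exact norm_Bhat_le ha hb hc
end

section
/- For fixed positive reals Z12, Z13, Z23 with Z12 > Z13, the value max over α, β ∈ [0,1] of min{ α·Z13 + (1−α)·Z23 + 2·sqrt((1−β)·α·(1−α)·Z13·Z23), α·β·Z12 } equals Z12·(Z13+Z23)/(Z12+Z23). -/
/-!
Put `t = αβ`. By AM-GM, `2√(xy) ≤ x + y` with `x = (1-β)αZ23` and `y = (1-α)Z13`, so the first
rate is at most `Z13 + Z23 - tZ23`, and the objective is at most `min (Z13 + Z23 - tZ23) (tZ12)`.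
This minimum of a decreasing and an increasing linear function of `t` is largest where they cross,
at `t = (Z13 + Z23)/(Z12 + Z23)`. That crossing is attained with equality in AM-GM: given `t`,
solving `x = y` together with `αβ = t` gives `α = (Z13 + tZ23)/(Z13 + Z23)`, a weighted mean of
`1` and `t`, and `β = t/α`.
-/

namespace PowerSplit

lemma two_mul_sqrt_mul_le_add {x y : ℝ} (hx : 0 ≤ x) (hy : 0 ≤ y) : 2 * √(x * y) ≤ x + y := by
  rw [Real.sqrt_mul hx]
  nlinarith [sq_nonneg (√x - √y), Real.sq_sqrt hx, Real.sq_sqrt hy]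

variable {a b α β : ℝ}

lemma rate_le (ha : 0 ≤ a) (hb : 0 ≤ b) (hα₀ : 0 ≤ α) (hα₁ : α ≤ 1) (hβ₁ : β ≤ 1) :
    α * a + (1 - α) * b + 2 * √((1 - β) * α * (1 - α) * a * b) ≤ a + b - α * β * b := by
  have hx : 0 ≤ (1 - β) * α * b := mul_nonneg (mul_nonneg (by linarith) hα₀) hb
  have hy : 0 ≤ (1 - α) * a := mul_nonneg (by linarith) ha
  have := two_mul_sqrt_mul_le_add hx hy
  rw [show (1 - β) * α * (1 - α) * a * b = ((1 - β) * α * b) * ((1 - α) * a) by ring]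
  linarith

lemma rate_eq_of_balanced (ha : 0 ≤ a) (hα₁ : α ≤ 1) (hbal : (1 - β) * α * b = (1 - α) * a) :
    α * a + (1 - α) * b + 2 * √((1 - β) * α * (1 - α) * a * b) = a + b - α * β * b := by
  have hy : 0 ≤ (1 - α) * a := mul_nonneg (by linarith) ha
  rw [show (1 - β) * α * (1 - α) * a * b = ((1 - β) * α * b) * ((1 - α) * a) by ring, hbal,
    Real.sqrt_mul_self hy]
  linear_combination -hbal

lemma exists_balanced_split (ha : 0 < a) (hb : 0 ≤ b) {t : ℝ} (ht₀ : 0 ≤ t) (ht₁ : t ≤ 1) :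
    ∃ α ∈ Set.Icc (0 : ℝ) 1, ∃ β ∈ Set.Icc (0 : ℝ) 1,
      α * β = t ∧ (1 - β) * α * b = (1 - α) * a := by
  set α := (a + t * b) / (a + b)
  have hab : 0 < a + b := by linarith
  have hα₀ : 0 < α := by positivity
  have htα : t ≤ α := by rw [le_div_iff₀ hab]; nlinarith
  have hα₁ : α ≤ 1 := by rw [div_le_one hab]; nlinarith
  refine ⟨α, ⟨hα₀.le, hα₁⟩, t / α, ⟨by positivity, div_le_one_of_le₀ htα hα₀.le⟩, ?_, ?_⟩
  · field_simp
  · have : α * (a + b) = a + t * b := div_mul_cancel₀ _ hab.ne'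
    field_simp
    linear_combination this

/-- The minimum is bounded by the convex combination with weights `E/(E+B)` and `B/(E+B)`, in
which `t` cancels. -/
lemma min_sub_mul_mul_le {A B E t : ℝ} (hB : 0 ≤ B) (hE : 0 < E) :
    min (A - t * B) (t * E) ≤ E * A / (E + B) := by
  rw [le_div_iff₀ (by linarith)]
  linarith [mul_le_mul_of_nonneg_left (min_le_left (A - t * B) (t * E)) hE.le,
    mul_le_mul_of_nonneg_left (min_le_right (A - t * B) (t * E)) hB]

end PowerSplit

theorem df_power_split_max_general (Z12 Z13 Z23 : ℝ) (h13 : 0 < Z13) (h23 : 0 < Z23)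
    (h : Z13 < Z12) :
    IsGreatest
      {v : ℝ | ∃ α ∈ Set.Icc (0 : ℝ) 1, ∃ β ∈ Set.Icc (0 : ℝ) 1,
        v = min (α * Z13 + (1 - α) * Z23 +
            2 * Real.sqrt ((1 - β) * α * (1 - α) * Z13 * Z23))
          (α * β * Z12)}
      (Z12 * (Z13 + Z23) / (Z12 + Z23)) := by
  have hsum : 0 < Z12 + Z23 := by linarith
  set t := (Z13 + Z23) / (Z12 + Z23)
  have hcross : t * (Z12 + Z23) = Z13 + Z23 := div_mul_cancel₀ _ hsum.ne'
  constructor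
  · obtain ⟨α, hα, β, hβ, hαβ, hbal⟩ :=
      PowerSplit.exists_balanced_split h13 h23.le (t := t) (by positivity)
        ((div_le_one hsum).2 (by linarith))
    refine ⟨α, hα, β, hβ, ?_⟩
    have hrate : Z13 + Z23 - t * Z23 = t * Z12 := by linear_combination -hcross
    rw [PowerSplit.rate_eq_of_balanced h13.le hα.2 hbal, hαβ, hrate, min_self,
      mul_div_assoc, mul_comm]
  · rintro v ⟨α, ⟨hα₀, hα₁⟩, β, ⟨-, hβ₁⟩, rfl⟩
    calc _ ≤ min (Z13 + Z23 - α * β * Z23) (α * β * Z12) :=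
          min_le_min_right _ (PowerSplit.rate_le h13.le h23.le hα₀ hα₁ hβ₁)
      _ ≤ _ := PowerSplit.min_sub_mul_mul_le h23.le (by linarith)

theorem df_power_split_max (Z12 Z13 Z23 : ℝ) (h12 : 0 < Z12) (h13 : 0 < Z13) (h23 : 0 < Z23)
    (h : Z13 < Z12) :
    IsGreatest
      {v : ℝ | ∃ α ∈ Set.Icc (0 : ℝ) 1, ∃ β ∈ Set.Icc (0 : ℝ) 1,
        v = min (α * Z13 + (1 - α) * Z23 +
            2 * Real.sqrt ((1 - β) * α * (1 - α) * Z13 * Z23))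
          (α * β * Z12)}
      (Z12 * (Z13 + Z23) / (Z12 + Z23)) :=
  df_power_split_max_general Z12 Z13 Z23 h13 h23 h
end
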